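/- Let j, k be natural numbers with 0 < j < k and let a₀, a₁, a₂, b₀, b₁, b₂ be real numbers. Consider the Abel equation x' = (a₀ + a₁tʲ + a₂tᵏ)x³ + (b₀ + b₁tʲ + b₂tᵏ)x². Suppose it does not have a center at x = 0 and at least one of the following conditions holds: (1) a₂b₁ − a₁b₂ = 0, or (a₂b₀ − a₀b₂)/(a₂b₁ − a₁b₂) ∉ (−1, 0); (2) a₁b₂ − a₂b₁ = 0, or (a₁b₀ − a₀b₁)/(a₁b₂ − a₂b₁) ∉ (−1, 0); (3) a₀b₂ − a₂b₀ = 0, or (a₀b₁ − a₁b₀)/(a₀b₂ − a₂b₀) ∉ (−1, 0). Then the equation has at most one periodic orbit with nonzero initial condition, and every periodic orbit γ with γ(0) ≠ 0 is hyperbolic. -/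

import Mathlib

/-- `γ : ℝ → ℝ` is a solution of the Abel equation `x' = A(t)x³ + B(t)x²` on `[0,1]`. -/
def IsAbelSolution (A B : ℝ → ℝ) (γ : ℝ → ℝ) : Prop :=
  ∀ t ∈ Set.Icc (0:ℝ) 1,
    HasDerivWithinAt γ (A t * γ t ^ 3 + B t * γ t ^ 2) (Set.Icc (0:ℝ) 1) t

/-- A periodic orbit of the Abel equation: a solution on `[0,1]` with `γ 0 = γ 1`. -/
def IsPeriodicOrbit (A B : ℝ → ℝ) (γ : ℝ → ℝ) : Prop :=
  IsAbelSolution A B γ ∧ γ 0 = γ 1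

/-- A periodic orbit is hyperbolic iff `∫₀¹ (3A(t)γ(t)² + 2B(t)γ(t)) dt ≠ 0`. -/
def IsHyperbolic (A B : ℝ → ℝ) (γ : ℝ → ℝ) : Prop :=
  (∫ t in (0:ℝ)..1, (3 * A t * γ t ^ 2 + 2 * B t * γ t)) ≠ 0

/-- The Abel equation has a center at `x = 0`: all solutions starting close enough
to `0` are defined on all of `[0,1]` and are periodic orbits. -/
def HasCenterAtZero (A B : ℝ → ℝ) : Prop :=
  ∃ ε > (0:ℝ), ∀ ρ : ℝ, |ρ| < ε →
    ∃ γ : ℝ → ℝ, IsAbelSolution A B γ ∧ γ 0 = ρ ∧ γ 0 = γ 1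

/-!
The conditions on the coefficients provide a combination `P = αA + βB`, `(α, β) ≠ 0`, that does
not change sign on `[0,1]`: the pair `(-bᵢ, aᵢ)` leaves a binomial in `s = tᵐ ∈ [0,1]`, whose sign
is constant exactly when the `i`-th quotient lies outside `(-1, 0)`.

Along a periodic orbit `γ`, `∫₀¹ h(γ) γ' = 0` for every `h` continuous on the range of `γ`.
If `P ≢ 0`, an orbit with `γ(0) ≠ 0` avoids `0` and the line `βx = α`, on which the field has
the sign of `P`; then `h = 1/(x²(βx - α))` and `h = 2/x + β/(βx - α)` give
`∫ P (γ₂ - γ₁)/((βγ₁ - α)(βγ₂ - α)) = 0` and `∫ (3Aγ² + 2Bγ) = -∫ P γ²/(βγ - α)`.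
Both weights keep a sign, so two such orbits coincide and the second integral is not zero.
If `P ≡ 0` the equation is separable, `x' = C(t)(cx³ + dx²)`, and `h = 1/(cx³ + dx²)` shows
that it has a center when `∫ C = 0`, and otherwise its only periodic orbit off the axis is the
constant `-d/c`.
-/

open Set intervalIntegral MeasureTheory

section Calculus

variable {a b : ℝ}

lemma forall_pos_or_forall_neg_of_ne_zero {s : Set ℝ} (hs : IsPreconnected s) {w : ℝ → ℝ}
    (hw : ContinuousOn w s) (h0 : ∀ t ∈ s, w t ≠ 0) :
    (∀ t ∈ s, 0 < w t) ∨ (∀ t ∈ s, w t < 0) := by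
  by_contra! h
  obtain ⟨⟨x, hx, hwx⟩, ⟨y, hy, hwy⟩⟩ := h
  obtain ⟨z, hz, hwz⟩ := hs.intermediate_value hx hy hw ⟨hwx, hwy⟩
  exact h0 z hz hwz

lemma integral_mul_ne_zero_of_nonneg {P w : ℝ → ℝ} (hab : a < b)
    (hP : ContinuousOn P (Icc a b)) (hP0 : ∀ t ∈ Icc a b, 0 ≤ P t)
    {t₀ : ℝ} (ht₀ : t₀ ∈ Icc a b) (hPt₀ : P t₀ ≠ 0)
    (hw : ContinuousOn w (Icc a b)) (hw0 : ∀ t ∈ Icc a b, w t ≠ 0) :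
    ∫ t in a..b, P t * w t ≠ 0 := by
  have hpos : ∀ v : ℝ → ℝ, ContinuousOn v (Icc a b) → (∀ t ∈ Icc a b, 0 < v t) →
      0 < ∫ t in a..b, P t * v t := fun v hv hv0 =>
    integral_pos hab (hP.mul hv)
      (fun t ht => mul_nonneg (hP0 t (Ioc_subset_Icc_self ht))
        (hv0 t (Ioc_subset_Icc_self ht)).le)
      ⟨t₀, ht₀, mul_pos ((hP0 t₀ ht₀).lt_of_ne' hPt₀) (hv0 t₀ ht₀)⟩
  rcases forall_pos_or_forall_neg_of_ne_zero isPreconnected_Icc hw hw0 with h | h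
  · exact (hpos w hw h).ne'
  · have := hpos (-w) hw.neg fun t ht => neg_pos.2 (h t ht)
    simp only [Pi.neg_apply, mul_neg, intervalIntegral.integral_neg] at this
    exact (neg_pos.1 this).ne

lemma eq_of_integral_eq_zero {h : ℝ → ℝ} (hh : ContinuousOn h (uIcc a b))
    (h0 : ∀ x ∈ uIcc a b, h x ≠ 0) (hint : ∫ x in a..b, h x = 0) : a = b := by
  wlog hab : a ≤ b generalizing a b
  · exact (this (uIcc_comm a b ▸ hh) (uIcc_comm a b ▸ h0)
      (by rw [integral_symm, hint, neg_zero]) (le_of_not_ge hab)).symm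
  rw [uIcc_of_le hab] at hh h0
  refine hab.eq_or_lt.resolve_right fun hlt => ?_
  have := integral_mul_ne_zero_of_nonneg hlt continuousOn_const (fun _ _ => zero_le_one)
    (left_mem_Icc.2 hab) one_ne_zero hh h0
  simp_all

lemma exists_hasDerivAt_of_continuousOn_Icc (hab : a ≤ b) {q : ℝ → ℝ}
    (hq : ContinuousOn q (Icc a b)) : ∃ Q : ℝ → ℝ, ∀ t ∈ Icc a b, HasDerivAt Q (q t) t := by
  have hc : Continuous fun t => q (projIcc a b hab t) :=
    hq.comp_continuous (continuous_subtype_val.comp continuous_projIcc)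
      fun t => (projIcc a b hab t).2
  refine ⟨fun t => ∫ s in a..t, q (projIcc a b hab s), fun t ht => ?_⟩
  simpa [projIcc_of_mem hab ht] using (hc.integral_hasStrictDerivAt a t).hasDerivAt

lemma monotoneOn_mul_exp_neg {u q r Q : ℝ → ℝ} (hQ : ∀ t ∈ Icc a b, HasDerivAt Q (q t) t)
    (hu : ∀ t ∈ Icc a b, HasDerivWithinAt u (q t * u t + r t) (Icc a b) t)
    (hr : ∀ t ∈ Icc a b, 0 ≤ r t) :
    MonotoneOn (fun t => u t * Real.exp (-Q t)) (Icc a b) := by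
  have hd : ∀ t ∈ Icc a b, HasDerivWithinAt (fun t => u t * Real.exp (-Q t))
      (r t * Real.exp (-Q t)) (Icc a b) t := fun t ht => by
    refine ((hu t ht).mul (hQ t ht).neg.exp.hasDerivWithinAt).congr_deriv ?_
    simp only [Pi.neg_apply]
    ring
  exact monotoneOn_of_hasDerivWithinAt_nonneg (convex_Icc a b)
    (fun t ht => (hd t ht).continuousWithinAt)
    (fun t ht => (hd t (interior_subset ht)).mono interior_subset)
    (fun t ht => mul_nonneg (hr t (interior_subset ht)) (Real.exp_pos _).le)

lemma eqOn_zero_of_hasDerivWithinAt_mul {u q : ℝ → ℝ} (hab : a ≤ b)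
    (hq : ContinuousOn q (Icc a b))
    (hu : ∀ t ∈ Icc a b, HasDerivWithinAt u (q t * u t) (Icc a b) t)
    {t₀ : ℝ} (ht₀ : t₀ ∈ Icc a b) (hut₀ : u t₀ = 0) : EqOn u 0 (Icc a b) := by
  obtain ⟨Q, hQ⟩ := exists_hasDerivAt_of_continuousOn_Icc hab hq
  have hmono := monotoneOn_mul_exp_neg hQ (r := 0) (by simpa using hu) fun _ _ => le_rfl
  have hanti := monotoneOn_mul_exp_neg hQ (u := -u) (r := 0)
    (fun t ht => by simpa using (hu t ht).neg) fun _ _ => le_rfl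
  have hconst : ∀ s ∈ Icc a b, ∀ s' ∈ Icc a b, s ≤ s' →
      u s * Real.exp (-Q s) = u s' * Real.exp (-Q s') := fun s hs s' hs' h =>
    le_antisymm (hmono hs hs' h) (by simpa using hanti hs hs' h)
  intro t ht
  have : u t * Real.exp (-Q t) = 0 := by
    rcases le_total t t₀ with h | h
    · rw [hconst t ht t₀ ht₀ h, hut₀, zero_mul]
    · rw [← hconst t₀ ht₀ t ht h, hut₀, zero_mul]
  simpa [Real.exp_ne_zero] using this

lemma eqOn_zero_or_forall_ne_zero_of_hasDerivWithinAt {u q r : ℝ → ℝ} (hab : a ≤ b)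
    (hq : ContinuousOn q (Icc a b))
    (hu : ∀ t ∈ Icc a b, HasDerivWithinAt u (q t * u t + r t) (Icc a b) t)
    (hr : ∀ t ∈ Icc a b, 0 ≤ r t) (hper : u a = u b) :
    EqOn u 0 (Icc a b) ∨ ∀ t ∈ Icc a b, u t ≠ 0 := by
  obtain ⟨Q, hQ⟩ := exists_hasDerivAt_of_continuousOn_Icc hab hq
  have hmono := monotoneOn_mul_exp_neg hQ hu hr
  have hlow : ∀ t ∈ Icc a b, u a * Real.exp (-Q a) ≤ u t * Real.exp (-Q t) := fun t ht =>
    hmono (left_mem_Icc.2 hab) ht ht.1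
  have hup : ∀ t ∈ Icc a b, u t * Real.exp (-Q t) ≤ u a * Real.exp (-Q b) := fun t ht => by
    simpa [hper] using hmono ht (right_mem_Icc.2 hab) ht.2
  rcases lt_trichotomy (u a) 0 with hneg | hzero | hpos
  · refine Or.inr fun t ht hut => ?_
    have := hup t ht
    rw [hut, zero_mul] at this
    exact (mul_neg_of_neg_of_pos hneg (Real.exp_pos _)).not_ge this
  · refine Or.inl fun t ht => ?_
    have h := le_antisymm (hup t ht) (by simpa [hzero] using hlow t ht)
    simpa [hzero, Real.exp_ne_zero] using h
  · refine Or.inr fun t ht hut => ?_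
    have := hlow t ht
    rw [hut, zero_mul] at this
    exact (mul_pos hpos (Real.exp_pos _)).not_ge this

end Calculus

section Abel

variable {A B γ σ γ₁ γ₂ : ℝ → ℝ}

lemma isAbelSolution_const {x : ℝ} (h : ∀ t ∈ Icc (0:ℝ) 1, A t * x ^ 3 + B t * x ^ 2 = 0) :
    IsAbelSolution A B fun _ => x := fun t ht => by
  rw [h t ht]
  exact hasDerivWithinAt_const t _ x

namespace IsAbelSolution

lemma continuousOn (hγ : IsAbelSolution A B γ) : ContinuousOn γ (Icc 0 1) :=
  fun t ht => (hγ t ht).continuousWithinAt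

lemma vectorField_eq_zero_of_eqOn_const (hγ : IsAbelSolution A B γ) {x : ℝ}
    (hx : EqOn γ (fun _ => x) (Icc 0 1)) : ∀ t ∈ Icc (0:ℝ) 1, A t * x ^ 3 + B t * x ^ 2 = 0 := by
  intro t ht
  have hγt : γ t = x := hx ht
  have h := hγ t ht
  rw [hγt] at h
  exact (uniqueDiffOn_Icc zero_lt_one t ht).eq_deriv _ h
    ((hasDerivWithinAt_const t _ x).congr hx hγt)

variable (hA : ContinuousOn A (Icc 0 1)) (hB : ContinuousOn B (Icc 0 1))
include hA hB

lemma eqOn_of_eq (hγ : IsAbelSolution A B γ) (hσ : IsAbelSolution A B σ) {t₀ : ℝ}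
    (ht₀ : t₀ ∈ Icc (0:ℝ) 1) (h : γ t₀ = σ t₀) : EqOn γ σ (Icc 0 1) := by
  have hγc := hγ.continuousOn
  have hσc := hσ.continuousOn
  have hq : ContinuousOn (fun t => A t * (γ t ^ 2 + γ t * σ t + σ t ^ 2) + B t * (γ t + σ t))
      (Icc 0 1) := by fun_prop
  have hdiff := eqOn_zero_of_hasDerivWithinAt_mul zero_le_one hq (u := γ - σ)
    (fun t ht => ((hγ t ht).sub (hσ t ht)).congr_deriv (by simp only [Pi.sub_apply]; ring))
    ht₀ (by simp [h])
  intro t ht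
  simpa [sub_eq_zero] using hdiff ht

lemma ne_zero (hγ : IsAbelSolution A B γ) (h0 : γ 0 ≠ 0) : ∀ t ∈ Icc (0:ℝ) 1, γ t ≠ 0 :=
  fun t ht hγt => h0 <| hγ.eqOn_of_eq hA hB (isAbelSolution_const fun _ _ => by ring) ht hγt
    (left_mem_Icc.2 zero_le_one)

lemma integral_comp_mul_eq (hγ : IsAbelSolution A B γ) {h : ℝ → ℝ}
    (hh : ContinuousOn h (γ '' Icc 0 1)) :
    ∫ t in (0:ℝ)..1, h (γ t) * (A t * γ t ^ 3 + B t * γ t ^ 2) = ∫ x in γ 0..γ 1, h x := by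
  have hγc := hγ.continuousOn
  have hI : uIcc (0:ℝ) 1 = Icc 0 1 := uIcc_of_le zero_le_one
  refine integral_comp_mul_deriv'' (hI ▸ hγc) (fun t ht => ?_) (hI ▸ by fun_prop) (hI ▸ hh)
  simp only [zero_le_one, min_eq_left, max_eq_right] at ht
  exact ((hγ t (Ioo_subset_Icc_self ht)).hasDerivAt (Icc_mem_nhds ht.1 ht.2)).hasDerivWithinAt

end IsAbelSolution

namespace IsPeriodicOrbit

variable (hA : ContinuousOn A (Icc 0 1)) (hB : ContinuousOn B (Icc 0 1))
include hA hB

lemma integral_comp_mul_eq_zero (hγ : IsPeriodicOrbit A B γ) {h : ℝ → ℝ}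
    (hh : ContinuousOn h (γ '' Icc 0 1)) :
    ∫ t in (0:ℝ)..1, h (γ t) * (A t * γ t ^ 3 + B t * γ t ^ 2) = 0 := by
  rw [hγ.1.integral_comp_mul_eq hA hB hh, hγ.2, integral_same]

variable {α β : ℝ}

lemma mul_sub_ne_zero (hP : ∀ t ∈ Icc (0:ℝ) 1, 0 ≤ α * A t + β * B t) {t₀ : ℝ}
    (ht₀ : t₀ ∈ Icc (0:ℝ) 1) (hPt₀ : α * A t₀ + β * B t₀ ≠ 0)
    (hγ : IsPeriodicOrbit A B γ) (h0 : γ 0 ≠ 0) : ∀ t ∈ Icc (0:ℝ) 1, β * γ t - α ≠ 0 := by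
  rcases eq_or_ne β 0 with rfl | hβ
  · intro t _
    simpa using left_ne_zero_of_mul (by simpa using hPt₀)
  set x₀ := α / β with hx₀
  have hγc := hγ.1.continuousOn
  -- the field at `x₀ = α / β` is `x₀² P / β`
  have hu : ∀ t ∈ Icc (0:ℝ) 1, HasDerivWithinAt (fun t => β * γ t - α)
      ((A t * (γ t ^ 2 + γ t * x₀ + x₀ ^ 2) + B t * (γ t + x₀)) * (β * γ t - α)
        + x₀ ^ 2 * (α * A t + β * B t)) (Icc 0 1) t := fun t ht => by
    refine (((hγ.1 t ht).const_mul β).sub_const α).congr_deriv ?_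
    rw [hx₀]
    field_simp
    ring
  rcases eqOn_zero_or_forall_ne_zero_of_hasDerivWithinAt zero_le_one (by fun_prop) hu
    (fun t ht => mul_nonneg (sq_nonneg _) (hP t ht)) (by simp [hγ.2]) with h | h
  · have hγx₀ : EqOn γ (fun _ => x₀) (Icc 0 1) := fun t ht => by
      have := h ht
      simp only [Pi.zero_apply] at this
      rw [hx₀, eq_div_iff hβ]
      linarith
    have hx₀0 : x₀ ≠ 0 := fun hx => h0 ((hγx₀ (left_mem_Icc.2 zero_le_one)).trans hx)
    have hfield := hγ.1.vectorField_eq_zero_of_eqOn_const hγx₀ t₀ ht₀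
    refine absurd ?_ hPt₀
    have : x₀ ^ 2 * (α * A t₀ + β * B t₀) = β * (A t₀ * x₀ ^ 3 + B t₀ * x₀ ^ 2) := by
      rw [hx₀]
      field_simp
    rw [hfield, mul_zero] at this
    exact (mul_eq_zero.1 this).resolve_left (pow_ne_zero 2 hx₀0)
  · exact h

lemma integral_add_div_eq_zero (hγ : IsPeriodicOrbit A B γ)
    (hne : ∀ t ∈ Icc (0:ℝ) 1, γ t ≠ 0) (hL : ∀ t ∈ Icc (0:ℝ) 1, β * γ t - α ≠ 0) :
    ∫ t in (0:ℝ)..1, (A t * γ t + B t) / (β * γ t - α) = 0 := by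
  have hh : ContinuousOn (fun x => (x ^ 2 * (β * x - α))⁻¹) (γ '' Icc 0 1) :=
    (by fun_prop : Continuous fun x : ℝ => x ^ 2 * (β * x - α)).continuousOn.inv₀ <| by
      rintro _ ⟨t, ht, rfl⟩
      exact mul_ne_zero (pow_ne_zero 2 (hne t ht)) (hL t ht)
  refine (integral_congr fun t ht => ?_).trans (hγ.integral_comp_mul_eq_zero hA hB hh)
  rw [uIcc_of_le zero_le_one] at ht
  have := hne t ht
  have := hL t ht
  field_simp

lemma integral_add_mul_sq_div_eq_zero (hγ : IsPeriodicOrbit A B γ)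
    (hne : ∀ t ∈ Icc (0:ℝ) 1, γ t ≠ 0) (hL : ∀ t ∈ Icc (0:ℝ) 1, β * γ t - α ≠ 0) :
    ∫ t in (0:ℝ)..1, ((3 * A t * γ t ^ 2 + 2 * B t * γ t)
      + (α * A t + β * B t) * (γ t ^ 2 / (β * γ t - α))) = 0 := by
  have hh : ContinuousOn (fun x => 2 / x + β / (β * x - α)) (γ '' Icc 0 1) := by
    refine (continuousOn_const.div continuousOn_id ?_).add
      (continuousOn_const.div (by fun_prop) ?_) <;> rintro _ ⟨t, ht, rfl⟩
    exacts [hne t ht, hL t ht]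
  refine (integral_congr fun t ht => ?_).trans (hγ.integral_comp_mul_eq_zero hA hB hh)
  rw [uIcc_of_le zero_le_one] at ht
  have := hne t ht
  have : γ t * β - α ≠ 0 := by rw [mul_comm]; exact hL t ht
  field_simp
  ring

lemma integral_mul_sub_div_eq_zero (hγ₁ : IsPeriodicOrbit A B γ₁) (hγ₂ : IsPeriodicOrbit A B γ₂)
    (hne₁ : ∀ t ∈ Icc (0:ℝ) 1, γ₁ t ≠ 0) (hne₂ : ∀ t ∈ Icc (0:ℝ) 1, γ₂ t ≠ 0)
    (hL₁ : ∀ t ∈ Icc (0:ℝ) 1, β * γ₁ t - α ≠ 0) (hL₂ : ∀ t ∈ Icc (0:ℝ) 1, β * γ₂ t - α ≠ 0) :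
    ∫ t in (0:ℝ)..1, (α * A t + β * B t) *
      ((γ₂ t - γ₁ t) / ((β * γ₁ t - α) * (β * γ₂ t - α))) = 0 := by
  have hv : ∀ γ : ℝ → ℝ, ContinuousOn γ (Icc 0 1) → (∀ t ∈ Icc (0:ℝ) 1, β * γ t - α ≠ 0) →
      IntervalIntegrable (fun t => (A t * γ t + B t) / (β * γ t - α)) volume 0 1 :=
    fun γ hγc hL => ContinuousOn.intervalIntegrable_of_Icc zero_le_one
      ((hA.mul hγc).add hB |>.div (by fun_prop) hL)
  calc ∫ t in (0:ℝ)..1, (α * A t + β * B t) *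
        ((γ₂ t - γ₁ t) / ((β * γ₁ t - α) * (β * γ₂ t - α)))
      = ∫ t in (0:ℝ)..1, ((A t * γ₁ t + B t) / (β * γ₁ t - α)
          - (A t * γ₂ t + B t) / (β * γ₂ t - α)) := by
        refine integral_congr fun t ht => ?_
        rw [uIcc_of_le zero_le_one] at ht
        have := hL₁ t ht
        have := hL₂ t ht
        field_simp
        ring
    _ = 0 := by
        rw [integral_sub (hv γ₁ hγ₁.1.continuousOn hL₁) (hv γ₂ hγ₂.1.continuousOn hL₂),
          hγ₁.integral_add_div_eq_zero hA hB hne₁ hL₁,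
          hγ₂.integral_add_div_eq_zero hA hB hne₂ hL₂, sub_zero]

lemma eqOn_of_nonneg_combination (hP : ∀ t ∈ Icc (0:ℝ) 1, 0 ≤ α * A t + β * B t) {t₀ : ℝ}
    (ht₀ : t₀ ∈ Icc (0:ℝ) 1) (hPt₀ : α * A t₀ + β * B t₀ ≠ 0)
    (hγ₁ : IsPeriodicOrbit A B γ₁) (hγ₂ : IsPeriodicOrbit A B γ₂)
    (h₁ : γ₁ 0 ≠ 0) (h₂ : γ₂ 0 ≠ 0) : EqOn γ₁ γ₂ (Icc 0 1) := by
  have h0 : (0:ℝ) ∈ Icc (0:ℝ) 1 := left_mem_Icc.2 zero_le_one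
  by_cases h00 : γ₁ 0 = γ₂ 0
  · exact hγ₁.1.eqOn_of_eq hA hB hγ₂.1 h0 h00
  have hL₁ := hγ₁.mul_sub_ne_zero hA hB hP ht₀ hPt₀ h₁
  have hL₂ := hγ₂.mul_sub_ne_zero hA hB hP ht₀ hPt₀ h₂
  have hδ : ∀ t ∈ Icc (0:ℝ) 1, γ₂ t - γ₁ t ≠ 0 := fun t ht h =>
    h00 (hγ₁.1.eqOn_of_eq hA hB hγ₂.1 ht (sub_eq_zero.1 h).symm h0)
  have hγ₁c := hγ₁.1.continuousOn
  have hγ₂c := hγ₂.1.continuousOn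
  have hw : ContinuousOn (fun t => (γ₂ t - γ₁ t) / ((β * γ₁ t - α) * (β * γ₂ t - α)))
      (Icc 0 1) :=
    (hγ₂c.sub hγ₁c).div (by fun_prop) fun t ht => mul_ne_zero (hL₁ t ht) (hL₂ t ht)
  exact absurd (hγ₁.integral_mul_sub_div_eq_zero hA hB hγ₂ (hγ₁.1.ne_zero hA hB h₁)
      (hγ₂.1.ne_zero hA hB h₂) hL₁ hL₂)
    (integral_mul_ne_zero_of_nonneg zero_lt_one (by fun_prop) hP ht₀ hPt₀ hw
      fun t ht => div_ne_zero (hδ t ht) (mul_ne_zero (hL₁ t ht) (hL₂ t ht)))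

lemma isHyperbolic_of_nonneg_combination (hP : ∀ t ∈ Icc (0:ℝ) 1, 0 ≤ α * A t + β * B t)
    {t₀ : ℝ} (ht₀ : t₀ ∈ Icc (0:ℝ) 1) (hPt₀ : α * A t₀ + β * B t₀ ≠ 0)
    (hγ : IsPeriodicOrbit A B γ) (h0 : γ 0 ≠ 0) : IsHyperbolic A B γ := by
  have hne := hγ.1.ne_zero hA hB h0
  have hL := hγ.mul_sub_ne_zero hA hB hP ht₀ hPt₀ h0
  have hγc := hγ.1.continuousOn
  have hw : ContinuousOn (fun t => γ t ^ 2 / (β * γ t - α)) (Icc 0 1) :=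
    (hγc.pow 2).div (by fun_prop) hL
  have hsum := hγ.integral_add_mul_sq_div_eq_zero hA hB hne hL
  rw [integral_add (ContinuousOn.intervalIntegrable_of_Icc zero_le_one (by fun_prop))
    (ContinuousOn.intervalIntegrable_of_Icc zero_le_one (by fun_prop))] at hsum
  intro hE
  rw [hE, zero_add] at hsum
  exact integral_mul_ne_zero_of_nonneg zero_lt_one (by fun_prop) hP ht₀ hPt₀ hw
    (fun t ht => div_ne_zero (pow_ne_zero 2 (hne t ht)) (hL t ht)) hsum

end IsPeriodicOrbit

end Abel

lemma isPicardLindelof_abel {A B : ℝ → ℝ} {M a : ℝ} (hA : ContinuousOn A (Icc 0 1))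
    (hB : ContinuousOn B (Icc 0 1)) (hM : ∀ t ∈ Icc (0:ℝ) 1, |A t| ≤ M ∧ |B t| ≤ M) (hM0 : 0 ≤ M)
    (ha : 0 < a) (ha1 : a ≤ 1) (haM : 4 * M * a ≤ 1) :
    IsPicardLindelof (fun t x => A t * x ^ 3 + B t * x ^ 2) (tmin := 0) (tmax := 1)
      ⟨0, left_mem_Icc.2 zero_le_one⟩ 0 ⟨a, ha.le⟩ ⟨a / 2, by positivity⟩ ⟨a / 2, by positivity⟩
      (Real.toNNReal (5 * M)) := by
  refine ⟨fun t ht => ?_, fun x _ => by fun_prop, fun t ht x hx => ?_, ?_⟩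
  · refine (convex_closedBall _ _).lipschitzOnWith_of_nnnorm_hasDerivWithin_le
      (fun x _ => (((hasDerivAt_pow 3 x).const_mul (A t)).add
        ((hasDerivAt_pow 2 x).const_mul (B t))).hasDerivWithinAt) fun x hx => ?_
    have hx1 : |x| ≤ 1 := by
      rw [Metric.mem_closedBall, dist_zero_right, Real.norm_eq_abs] at hx
      exact hx.trans ha1
    rw [← NNReal.coe_le_coe, coe_nnnorm, Real.coe_toNNReal _ (by positivity), Real.norm_eq_abs]
    calc |A t * (↑3 * x ^ (3 - 1)) + B t * (↑2 * x ^ (2 - 1))|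
        ≤ |A t| * (3 * |x| ^ 2) + |B t| * (2 * |x|) :=
          (abs_add_le _ _).trans_eq (by simp [abs_mul])
      _ ≤ M * (3 * 1 ^ 2) + M * (2 * 1) := by gcongr <;> linarith [hM t ht]
      _ = 5 * M := by ring
  · have hxa : |x| ≤ a := by
      rw [Metric.mem_closedBall, dist_zero_right, Real.norm_eq_abs] at hx
      exact hx
    rw [Real.norm_eq_abs]
    calc |A t * x ^ 3 + B t * x ^ 2| ≤ |A t| * |x| ^ 3 + |B t| * |x| ^ 2 :=
          (abs_add_le _ _).trans_eq (by simp [abs_mul])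
      _ ≤ M * a ^ 3 + M * a ^ 2 := by gcongr <;> linarith [hM t ht]
      _ ≤ M * a ^ 2 + M * a ^ 2 := add_le_add_left
          (mul_le_mul_of_nonneg_left (pow_le_pow_of_le_one ha.le ha1 (by norm_num)) hM0) _
      _ = a / 2 * (4 * M * a) := by ring
      _ ≤ a / 2 := mul_le_of_le_one_right (by positivity) haM
  · show a / 2 * max (1 - 0) (0 - 0) ≤ a - a / 2
    norm_num
    linarith

lemma exists_isAbelSolution {A B : ℝ → ℝ} (hA : ContinuousOn A (Icc 0 1))
    (hB : ContinuousOn B (Icc 0 1)) :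
    ∃ ε > 0, ∀ ρ : ℝ, |ρ| < ε → ∃ γ : ℝ → ℝ, IsAbelSolution A B γ ∧ γ 0 = ρ := by
  obtain ⟨M, hM⟩ : ∃ M, ∀ t ∈ Icc (0:ℝ) 1, |A t| ≤ M ∧ |B t| ≤ M := by
    obtain ⟨MA, hMA⟩ := isCompact_Icc.exists_bound_of_continuousOn hA
    obtain ⟨MB, hMB⟩ := isCompact_Icc.exists_bound_of_continuousOn hB
    exact ⟨max MA MB, fun t ht =>
      ⟨(hMA t ht).trans (le_max_left _ _), (hMB t ht).trans (le_max_right _ _)⟩⟩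
  have hM0 : 0 ≤ M := (abs_nonneg _).trans (hM 0 (left_mem_Icc.2 zero_le_one)).1
  have ha : 0 < (4 * M + 1)⁻¹ := by positivity
  have haM : 4 * M * (4 * M + 1)⁻¹ ≤ 1 := by
    rw [← div_eq_mul_inv, div_le_one (by positivity)]
    linarith
  have hpl := isPicardLindelof_abel hA hB hM hM0 ha (inv_le_one_of_one_le₀ (by linarith)) haM
  refine ⟨(4 * M + 1)⁻¹ / 2, by positivity, fun ρ hρ => ?_⟩
  obtain ⟨γ, hγ0, hγ⟩ := hpl.exists_eq_forall_mem_Icc_hasDerivWithinAt (x := ρ)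
    (by rw [Metric.mem_closedBall, dist_zero_right, Real.norm_eq_abs]; exact hρ.le)
  exact ⟨γ, hγ, hγ0⟩

section Separable

variable {A B C γ : ℝ → ℝ} {c d : ℝ}
  (hAC : ∀ t ∈ Icc (0:ℝ) 1, A t = c * C t) (hBC : ∀ t ∈ Icc (0:ℝ) 1, B t = d * C t)
include hAC hBC

lemma IsAbelSolution.eqOn_const_or_forall_ne_zero_of_separable
    (hA : ContinuousOn A (Icc 0 1)) (hB : ContinuousOn B (Icc 0 1))
    (hγ : IsAbelSolution A B γ) :
    (∃ x, c * x ^ 3 + d * x ^ 2 = 0 ∧ EqOn γ (fun _ => x) (Icc 0 1)) ∨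
      ∀ t ∈ Icc (0:ℝ) 1, c * γ t ^ 3 + d * γ t ^ 2 ≠ 0 := by
  refine or_iff_not_imp_right.2 fun h => ?_
  push Not at h
  obtain ⟨t, ht, hg⟩ := h
  refine ⟨γ t, hg, hγ.eqOn_of_eq hA hB (isAbelSolution_const fun s hs => ?_) ht rfl⟩
  rw [hAC s hs, hBC s hs]
  linear_combination C s * hg

lemma IsAbelSolution.integral_eq_of_separable
    (hA : ContinuousOn A (Icc 0 1)) (hB : ContinuousOn B (Icc 0 1))
    (hγ : IsAbelSolution A B γ) (hg : ∀ t ∈ Icc (0:ℝ) 1, c * γ t ^ 3 + d * γ t ^ 2 ≠ 0) :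
    ∫ t in (0:ℝ)..1, C t = ∫ x in γ 0..γ 1, (c * x ^ 3 + d * x ^ 2)⁻¹ := by
  have hh : ContinuousOn (fun x => (c * x ^ 3 + d * x ^ 2)⁻¹) (γ '' Icc 0 1) :=
    (by fun_prop : Continuous fun x : ℝ => c * x ^ 3 + d * x ^ 2).continuousOn.inv₀ <| by
      rintro _ ⟨t, ht, rfl⟩
      exact hg t ht
  refine (integral_congr fun t ht => ?_).trans (hγ.integral_comp_mul_eq hA hB hh)
  rw [uIcc_of_le zero_le_one] at ht
  have := hg t ht
  rw [hAC t ht, hBC t ht,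
    show c * C t * γ t ^ 3 + d * C t * γ t ^ 2 = (c * γ t ^ 3 + d * γ t ^ 2) * C t by ring,
    inv_mul_cancel_left₀ this]

lemma hasCenterAtZero_of_separable (hC : ContinuousOn C (Icc 0 1))
    (hint : ∫ t in (0:ℝ)..1, C t = 0) : HasCenterAtZero A B := by
  have hA : ContinuousOn A (Icc 0 1) := (continuousOn_const.mul hC).congr hAC
  have hB : ContinuousOn B (Icc 0 1) := (continuousOn_const.mul hC).congr hBC
  obtain ⟨ε, hε, hsol⟩ := exists_isAbelSolution hA hB
  refine ⟨ε, hε, fun ρ hρ => ?_⟩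
  obtain ⟨γ, hγ, rfl⟩ := hsol ρ hρ
  refine ⟨γ, hγ, rfl, ?_⟩
  rcases hγ.eqOn_const_or_forall_ne_zero_of_separable hAC hBC hA hB with ⟨x, -, hx⟩ | hg
  · rw [hx (left_mem_Icc.2 zero_le_one), hx (right_mem_Icc.2 zero_le_one)]
  have hsub : uIcc (γ 0) (γ 1) ⊆ γ '' Icc 0 1 := by
    simpa only [uIcc_of_le zero_le_one] using intermediate_value_uIcc (a := (0:ℝ)) (b := 1)
      (by rw [uIcc_of_le zero_le_one]; exact hγ.continuousOn)
  have hgx : ∀ x ∈ uIcc (γ 0) (γ 1), c * x ^ 3 + d * x ^ 2 ≠ 0 := fun x hx => by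
    obtain ⟨t, ht, rfl⟩ := hsub hx
    exact hg t ht
  refine eq_of_integral_eq_zero (h := fun x => (c * x ^ 3 + d * x ^ 2)⁻¹)
    ((by fun_prop : Continuous fun x : ℝ => c * x ^ 3 + d * x ^ 2).continuousOn.inv₀ hgx)
    (fun x hx => inv_ne_zero (hgx x hx)) ?_
  rw [← hγ.integral_eq_of_separable hAC hBC hA hB hg, hint]

lemma IsPeriodicOrbit.eqOn_const_of_separable
    (hA : ContinuousOn A (Icc 0 1)) (hB : ContinuousOn B (Icc 0 1)) (hcd : c ≠ 0 ∨ d ≠ 0)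
    (hint : ∫ t in (0:ℝ)..1, C t ≠ 0) (hγ : IsPeriodicOrbit A B γ) (h0 : γ 0 ≠ 0) :
    c ≠ 0 ∧ EqOn γ (fun _ => -d / c) (Icc 0 1) := by
  rcases hγ.1.eqOn_const_or_forall_ne_zero_of_separable hAC hBC hA hB with ⟨x, hgx, hx⟩ | hg
  · have hx0 : x ≠ 0 := fun h => h0 ((hx (left_mem_Icc.2 zero_le_one)).trans h)
    have hcx : c * x + d = 0 :=
      (mul_eq_zero.1 (by linear_combination hgx : x ^ 2 * (c * x + d) = 0)).resolve_left
        (pow_ne_zero 2 hx0)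
    have hc : c ≠ 0 := fun hc => hcd.elim (· hc) (· (by simpa [hc] using hcx))
    refine ⟨hc, fun t ht => ?_⟩
    rw [hx ht, eq_div_iff hc]
    linarith
  · exact absurd (by rw [hγ.1.integral_eq_of_separable hAC hBC hA hB hg, hγ.2, integral_same])
      hint

lemma IsPeriodicOrbit.isHyperbolic_of_separable
    (hA : ContinuousOn A (Icc 0 1)) (hB : ContinuousOn B (Icc 0 1)) (hcd : c ≠ 0 ∨ d ≠ 0)
    (hint : ∫ t in (0:ℝ)..1, C t ≠ 0) (hγ : IsPeriodicOrbit A B γ) (h0 : γ 0 ≠ 0) :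
    IsHyperbolic A B γ := by
  obtain ⟨hc, hx⟩ := hγ.eqOn_const_of_separable hAC hBC hA hB hcd hint h0
  have hd : d ≠ 0 := fun hd => h0 (by simpa [hd] using hx (left_mem_Icc.2 zero_le_one))
  have : ∫ t in (0:ℝ)..1, (3 * A t * γ t ^ 2 + 2 * B t * γ t)
      = d ^ 2 / c * ∫ t in (0:ℝ)..1, C t := by
    rw [← intervalIntegral.integral_const_mul]
    refine integral_congr fun t ht => ?_
    rw [uIcc_of_le zero_le_one] at ht
    simp only [hx ht, hAC t ht, hBC t ht]
    field_simp
    ring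
  rw [IsHyperbolic, this]
  exact mul_ne_zero (div_ne_zero (pow_ne_zero 2 hd) hc) hint

end Separable

lemma exists_separable_of_combination_eq_zero {A B : ℝ → ℝ} {α β : ℝ}
    (hA : ContinuousOn A (Icc 0 1)) (hB : ContinuousOn B (Icc 0 1)) (hαβ : α ≠ 0 ∨ β ≠ 0)
    (h : ∀ t ∈ Icc (0:ℝ) 1, α * A t + β * B t = 0) :
    ∃ (C : ℝ → ℝ) (c d : ℝ), ContinuousOn C (Icc 0 1) ∧ (c ≠ 0 ∨ d ≠ 0) ∧
      (∀ t ∈ Icc (0:ℝ) 1, A t = c * C t) ∧ ∀ t ∈ Icc (0:ℝ) 1, B t = d * C t := by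
  rcases eq_or_ne β 0 with rfl | hβ
  · have hα : α ≠ 0 := hαβ.resolve_right (not_not.2 rfl)
    refine ⟨B, 0, 1, hB, Or.inr one_ne_zero, fun t ht => ?_, fun t _ => (one_mul _).symm⟩
    simpa [hα] using h t ht
  · refine ⟨A, 1, -α / β, hA, Or.inl one_ne_zero, fun t _ => (one_mul _).symm, fun t ht => ?_⟩
    field_simp
    linear_combination h t ht

def HasNonnegCombination (A B : ℝ → ℝ) : Prop :=
  ∃ α β : ℝ, (α ≠ 0 ∨ β ≠ 0) ∧ ∀ t ∈ Icc (0:ℝ) 1, 0 ≤ α * A t + β * B t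

lemma mul_add_nonneg_of_div_notMem_Ioo {c e : ℝ} (h : e = 0 ∨ c / e ∉ Ioo (-1 : ℝ) 0) :
    0 ≤ c * (c + e) := by
  rcases eq_or_ne e 0 with rfl | he
  · simpa using mul_self_nonneg c
  have hx : c / e ≤ -1 ∨ 0 ≤ c / e := by
    by_contra! hx
    exact h.resolve_left he hx
  rw [show c * (c + e) = e ^ 2 * (c / e * (c / e + 1)) by field_simp]
  refine mul_nonneg (sq_nonneg e) ?_
  rcases hx with hx | hx <;> nlinarith

lemma add_mul_pow_nonneg_or_nonpos {c e : ℝ} (h : 0 ≤ c * (c + e)) (m : ℕ) :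
    (∀ t ∈ Icc (0:ℝ) 1, 0 ≤ c + e * t ^ m) ∨ ∀ t ∈ Icc (0:ℝ) 1, c + e * t ^ m ≤ 0 := by
  have hs : ∀ t ∈ Icc (0:ℝ) 1, 0 ≤ t ^ m ∧ t ^ m ≤ 1 := fun t ht =>
    ⟨pow_nonneg ht.1 m, pow_le_one₀ ht.1 ht.2⟩
  -- `c + e s = (1 - s) c + s (c + e)`, and `c`, `c + e` do not have opposite signs
  rcases lt_trichotomy c 0 with hc | rfl | hc
  · have hce : c + e ≤ 0 := by nlinarith
    exact Or.inr fun t ht => by nlinarith [hs t ht]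
  · simp only [zero_add]
    exact (le_total 0 e).imp (fun he t ht => mul_nonneg he (hs t ht).1)
      fun he t ht => mul_nonpos_of_nonpos_of_nonneg he (hs t ht).1
  · have hce : 0 ≤ c + e := by nlinarith
    exact Or.inl fun t ht => by nlinarith [hs t ht]

lemma HasNonnegCombination.of_eq_mul_add_mul_pow {A B φ : ℝ → ℝ} {α β c e : ℝ} {m : ℕ}
    (hαβ : α ≠ 0 ∨ β ≠ 0) (hce : 0 ≤ c * (c + e)) (hφ : ∀ t ∈ Icc (0:ℝ) 1, 0 ≤ φ t)
    (h : ∀ t, α * A t + β * B t = φ t * (c + e * t ^ m)) : HasNonnegCombination A B := by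
  rcases add_mul_pow_nonneg_or_nonpos hce m with hs | hs
  · exact ⟨α, β, hαβ, fun t ht => h t ▸ mul_nonneg (hφ t ht) (hs t ht)⟩
  · refine ⟨-α, -β, by simpa using hαβ, fun t ht => ?_⟩
    have := mul_nonpos_of_nonneg_of_nonpos (hφ t ht) (hs t ht)
    linarith [h t]

lemma HasNonnegCombination.of_eq_add_mul_pow {A B : ℝ → ℝ} {a a' b b' : ℝ} {p n : ℕ}
    (hA : ∀ t, A t = a * t ^ p + a' * t ^ n) (hB : ∀ t, B t = b * t ^ p + b' * t ^ n) :
    HasNonnegCombination A B := by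
  by_cases hab : a = 0 ∧ b = 0
  · refine .of_eq_mul_add_mul_pow (α := 1) (β := 0) (c := 0) (e := a') (m := n) (φ := 1)
      (Or.inl one_ne_zero) (by simp) (fun _ _ => zero_le_one) fun t => ?_
    simp [hA, hab.1]
  · refine .of_eq_mul_add_mul_pow (α := -b) (β := a) (c := 0) (e := a * b' - b * a') (m := n)
      (φ := 1) (by rw [neg_ne_zero, or_comm]; exact not_and_or.1 hab) (by simp)
      (fun _ _ => zero_le_one) fun t => ?_
    simp only [hA, hB, Pi.one_apply]
    ring

lemma hasNonnegCombination_of_cond {j k : ℕ} (hjk : j < k) {a₀ a₁ a₂ b₀ b₁ b₂ : ℝ}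
    (h_cond :
      (a₂ * b₁ - a₁ * b₂ = 0 ∨
        (a₂ * b₀ - a₀ * b₂) / (a₂ * b₁ - a₁ * b₂) ∉ Set.Ioo (-1 : ℝ) 0) ∨
      (a₁ * b₂ - a₂ * b₁ = 0 ∨
        (a₁ * b₀ - a₀ * b₁) / (a₁ * b₂ - a₂ * b₁) ∉ Set.Ioo (-1 : ℝ) 0) ∨
      (a₀ * b₂ - a₂ * b₀ = 0 ∨
        (a₀ * b₁ - a₁ * b₀) / (a₀ * b₂ - a₂ * b₀) ∉ Set.Ioo (-1 : ℝ) 0)) :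
    HasNonnegCombination (fun t => a₀ + a₁ * t ^ j + a₂ * t ^ k)
      (fun t => b₀ + b₁ * t ^ j + b₂ * t ^ k) := by
  have hpair : ∀ a b : ℝ, ¬(a = 0 ∧ b = 0) → -b ≠ 0 ∨ a ≠ 0 := fun a b h => by
    rw [neg_ne_zero, or_comm]
    exact not_and_or.1 h
  -- the pair `(-bᵢ, aᵢ)` eliminates the `i`-th monomial; if it vanishes, two monomials are left
  rcases h_cond with h | h | h
  · by_cases h₂ : a₂ = 0 ∧ b₂ = 0
    · exact .of_eq_add_mul_pow (a := a₀) (a' := a₁) (b := b₀) (b' := b₁) (p := 0) (n := j)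
        (fun t => by simp [h₂.1]) (fun t => by simp [h₂.2])
    · exact .of_eq_mul_add_mul_pow (hpair _ _ h₂) (mul_add_nonneg_of_div_notMem_Ioo h)
        (φ := 1) (m := j) (fun _ _ => zero_le_one) fun t => by simp only [Pi.one_apply]; ring
  · by_cases h₁ : a₁ = 0 ∧ b₁ = 0
    · exact .of_eq_add_mul_pow (a := a₀) (a' := a₂) (b := b₀) (b' := b₂) (p := 0) (n := k)
        (fun t => by simp [h₁.1]) (fun t => by simp [h₁.2])
    · exact .of_eq_mul_add_mul_pow (hpair _ _ h₁) (mul_add_nonneg_of_div_notMem_Ioo h)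
        (φ := 1) (m := k) (fun _ _ => zero_le_one) fun t => by simp only [Pi.one_apply]; ring
  · by_cases h₀ : a₀ = 0 ∧ b₀ = 0
    · exact .of_eq_add_mul_pow (a := a₁) (a' := a₂) (b := b₁) (b' := b₂) (p := j) (n := k)
        (fun t => by simp [h₀.1]) (fun t => by simp [h₀.2])
    · refine .of_eq_mul_add_mul_pow (hpair _ _ h₀) (mul_add_nonneg_of_div_notMem_Ioo h)
        (φ := fun t => t ^ j) (fun t ht => pow_nonneg ht.1 j) (m := k - j) fun t => ?_
      rw [show t ^ k = t ^ j * t ^ (k - j) by rw [← pow_add, Nat.add_sub_cancel' hjk.le]]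
      ring

theorem polynomial_abel_uniqueness_general
    (j k : ℕ) (hjk : j < k)
    (a₀ a₁ a₂ b₀ b₁ b₂ : ℝ)
    (A B : ℝ → ℝ)
    (hA : A = fun t => a₀ + a₁ * t ^ j + a₂ * t ^ k)
    (hB : B = fun t => b₀ + b₁ * t ^ j + b₂ * t ^ k)
    (h_nocenter : ¬ HasCenterAtZero A B)
    (h_cond :
      (a₂ * b₁ - a₁ * b₂ = 0 ∨
        (a₂ * b₀ - a₀ * b₂) / (a₂ * b₁ - a₁ * b₂) ∉ Set.Ioo (-1 : ℝ) 0) ∨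
      (a₁ * b₂ - a₂ * b₁ = 0 ∨
        (a₁ * b₀ - a₀ * b₁) / (a₁ * b₂ - a₂ * b₁) ∉ Set.Ioo (-1 : ℝ) 0) ∨
      (a₀ * b₂ - a₂ * b₀ = 0 ∨
        (a₀ * b₁ - a₁ * b₀) / (a₀ * b₂ - a₂ * b₀) ∉ Set.Ioo (-1 : ℝ) 0)) :
    (∀ γ₁ γ₂ : ℝ → ℝ, IsPeriodicOrbit A B γ₁ → IsPeriodicOrbit A B γ₂ →
      γ₁ 0 ≠ 0 → γ₂ 0 ≠ 0 → Set.EqOn γ₁ γ₂ (Set.Icc 0 1)) ∧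
    (∀ γ : ℝ → ℝ, IsPeriodicOrbit A B γ → γ 0 ≠ 0 → IsHyperbolic A B γ) := by
  have hAc : ContinuousOn A (Icc 0 1) := by rw [hA]; fun_prop
  have hBc : ContinuousOn B (Icc 0 1) := by rw [hB]; fun_prop
  obtain ⟨α, β, hαβ, hP⟩ := hA ▸ hB ▸ hasNonnegCombination_of_cond hjk h_cond
  by_cases hP0 : ∀ t ∈ Icc (0:ℝ) 1, α * A t + β * B t = 0
  · obtain ⟨C, c, d, hC, hcd, hAC, hBC⟩ :=
      exists_separable_of_combination_eq_zero hAc hBc hαβ hP0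
    have hint : ∫ t in (0:ℝ)..1, C t ≠ 0 := fun h =>
      h_nocenter (hasCenterAtZero_of_separable hAC hBC hC h)
    refine ⟨fun γ₁ γ₂ h₁ h₂ h₁0 h₂0 => ?_, fun γ hγ h0 =>
      hγ.isHyperbolic_of_separable hAC hBC hAc hBc hcd hint h0⟩
    exact (h₁.eqOn_const_of_separable hAC hBC hAc hBc hcd hint h₁0).2.trans
      (h₂.eqOn_const_of_separable hAC hBC hAc hBc hcd hint h₂0).2.symm
  · push Not at hP0
    obtain ⟨t₀, ht₀, hPt₀⟩ := hP0
    exact ⟨fun γ₁ γ₂ h₁ h₂ h₁0 h₂0 =>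
        h₁.eqOn_of_nonneg_combination hAc hBc hP ht₀ hPt₀ h₂ h₁0 h₂0,
      fun γ hγ h0 => hγ.isHyperbolic_of_nonneg_combination hAc hBc hP ht₀ hPt₀ h0⟩

theorem polynomial_abel_uniqueness
    (j k : ℕ) (hj : 0 < j) (hjk : j < k)
    (a₀ a₁ a₂ b₀ b₁ b₂ : ℝ)
    (A B : ℝ → ℝ)
    (hA : A = fun t => a₀ + a₁ * t ^ j + a₂ * t ^ k)
    (hB : B = fun t => b₀ + b₁ * t ^ j + b₂ * t ^ k)
    (h_nocenter : ¬ HasCenterAtZero A B)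
    (h_cond :
      (a₂ * b₁ - a₁ * b₂ = 0 ∨
        (a₂ * b₀ - a₀ * b₂) / (a₂ * b₁ - a₁ * b₂) ∉ Set.Ioo (-1 : ℝ) 0) ∨
      (a₁ * b₂ - a₂ * b₁ = 0 ∨
        (a₁ * b₀ - a₀ * b₁) / (a₁ * b₂ - a₂ * b₁) ∉ Set.Ioo (-1 : ℝ) 0) ∨
      (a₀ * b₂ - a₂ * b₀ = 0 ∨
        (a₀ * b₁ - a₁ * b₀) / (a₀ * b₂ - a₂ * b₀) ∉ Set.Ioo (-1 : ℝ) 0)) :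
    (∀ γ₁ γ₂ : ℝ → ℝ, IsPeriodicOrbit A B γ₁ → IsPeriodicOrbit A B γ₂ →
      γ₁ 0 ≠ 0 → γ₂ 0 ≠ 0 → Set.EqOn γ₁ γ₂ (Set.Icc 0 1)) ∧
    (∀ γ : ℝ → ℝ, IsPeriodicOrbit A B γ → γ 0 ≠ 0 → IsHyperbolic A B γ) :=
  polynomial_abel_uniqueness_general j k hjk a₀ a₁ a₂ b₀ b₁ b₂ A B hA hB h_nocenter h_cond
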